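/- arXiv:2508.15962 — 3 statements merged into one kernel-verified Lean document; each statement's English description precedes it below -/
import Mathlib

section
/- Let g : ℂ → ℂ be an entire function, x ∈ ℝ, σ > 0, and let U ~ N(0, σ²) and Z ~ N(0, 1) be independent. Assume E[ Σ_{k=0}^∞ |g^{(k)}(x)|/k! · |U + iσZ|^k ] < ∞. Then E[g(x + U + iσZ)] = g(x); that is, g evaluated at the complex-error-augmented observation is an unbiased estimator of g evaluated at the true value. -/
/-!
Write `W = U + iσZ`. Since `g` is entire, `g (x + W) = ∑ₙ g⁽ⁿ⁾(x) / n! ⬝ Wⁿ`, and the integrability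
hypothesis is exactly the domination that lets the expectation pass through the sum, so it suffices
that `E[Wⁿ] = 0` for `n ≥ 1`. Expanding `(U + iσZ)ⁿ` binomially and using independence, `E[Wⁿ]` is
the `n`-th derivative at `0` of the product of the moment generating functions of `U` and of `iσZ`,
namely `exp (σ²t²/2) ⬝ exp (-σ²t²/2) = 1`.
-/

open MeasureTheory ProbabilityTheory Complex
open scoped NNReal Nat

lemma integrable_mul_pow_gaussianReal (m : ℝ) (v : ℝ≥0) (c : ℂ) (n : ℕ) :
    Integrable (fun x : ℝ => (c * x) ^ n) (gaussianReal m v) := by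
  simp_rw [mul_pow]
  refine Integrable.const_mul ?_ _
  exact_mod_cast (integrable_pow_of_mem_interior_integrableExpSet (X := id) (by simp) n).ofReal

lemma integral_mul_pow_gaussianReal (m : ℝ) (v : ℝ≥0) (c : ℂ) (n : ℕ) :
    ∫ x, (c * x) ^ n ∂gaussianReal m v =
      iteratedDeriv n (fun t => cexp (c * t * m + v * (c * t) ^ 2 / 2)) 0 := by
  have hmgf : complexMGF id (gaussianReal m v) = fun z => cexp (z * m + v * z ^ 2 / 2) :=
    funext complexMGF_id_gaussianReal
  rw [iteratedDeriv_comp_const_mul (f := fun z => cexp (z * m + v * z ^ 2 / 2)) (by fun_prop) c]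
  dsimp only
  rw [mul_zero, ← hmgf, iteratedDeriv_complexMGF (by simp)]
  simp [mul_pow, integral_const_mul]

theorem integral_add_pow_prod {α β 𝕜 : Type*} [MeasurableSpace α] [MeasurableSpace β] [RCLike 𝕜]
    {μ : Measure α} {ν : Measure β} [SFinite μ] [SFinite ν] {f : α → 𝕜} {g : β → 𝕜}
    (hf : ∀ j, Integrable (fun x => f x ^ j) μ) (hg : ∀ j, Integrable (fun y => g y ^ j) ν)
    (k : ℕ) :
    ∫ p, (f p.1 + g p.2) ^ k ∂μ.prod ν =
      ∑ j ∈ Finset.range (k + 1), k.choose j * (∫ x, f x ^ j ∂μ) * ∫ y, g y ^ (k - j) ∂ν := by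
  simp_rw [add_pow]
  rw [integral_finsetSum _ fun j _ => ((hf j).mul_prod (hg (k - j))).mul_const _]
  refine Finset.sum_congr rfl fun j _ => ?_
  rw [integral_mul_const, integral_prod_mul (fun x => f x ^ j) (fun y => g y ^ (k - j))]
  ring

theorem integral_add_I_mul_pow_gaussianReal_prod_eq_zero (σ : ℝ) {k : ℕ} (hk : k ≠ 0) :
    ∫ p, ((p.1 : ℂ) + I * σ * p.2) ^ k
      ∂(gaussianReal 0 (σ ^ 2).toNNReal).prod (gaussianReal 0 1) = 0 := by
  rw [show (fun p : ℝ × ℝ => ((p.1 : ℂ) + I * σ * p.2) ^ k) =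
      fun p => ((1 : ℂ) * p.1 + I * σ * p.2) ^ k by simp only [one_mul],
    integral_add_pow_prod (integrable_mul_pow_gaussianReal _ _ 1)
      (integrable_mul_pow_gaussianReal _ _ _) k]
  simp_rw [integral_mul_pow_gaussianReal]
  rw [← iteratedDeriv_fun_mul (by fun_prop) (by fun_prop)]
  have hprod : (fun t : ℂ => cexp (1 * t * (0 : ℝ) + ((σ ^ 2).toNNReal : ℝ≥0) * (1 * t) ^ 2 / 2) *
      cexp (I * σ * t * (0 : ℝ) + ((1 : ℝ≥0) : ℂ) * (I * σ * t) ^ 2 / 2)) = fun _ => 1 := by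
    ext t
    rw [← Complex.exp_add]
    convert Complex.exp_zero using 2
    push_cast [Real.coe_toNNReal _ (sq_nonneg σ)]
    linear_combination (σ ^ 2 * t ^ 2 / 2 : ℂ) * I_sq
  rw [hprod, iteratedDeriv_const, if_neg hk]

theorem summable_norm_iteratedDeriv_div_factorial_mul_pow {g : ℂ → ℂ} (hg : Differentiable ℂ g)
    (c : ℂ) (r : ℝ) : Summable fun n => ‖iteratedDeriv n g c‖ / n ! * r ^ n := by
  -- the terms of the Taylor series at radius `2 |r|` are bounded, which gives a geometric majorant
  have hconv := hasSum_taylorSeries_of_entire hg c (c + 2 * |r|)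
  obtain ⟨C, hC⟩ := hconv.summable.tendsto_atTop_zero.norm.bddAbove_range
  refine .of_norm_bounded (summable_geometric_two.mul_left C) fun n => ?_
  have hn := hC ⟨n, rfl⟩
  simp only [add_sub_cancel_left, norm_smul, norm_inv, norm_pow, Complex.norm_natCast, norm_mul,
    Complex.norm_ofNat, Complex.norm_real, Real.norm_eq_abs, abs_abs] at hn
  rw [Real.norm_eq_abs, abs_mul, abs_pow, abs_div, abs_norm, Nat.abs_cast]
  calc ‖iteratedDeriv n g c‖ / n ! * |r| ^ n
      = (n ! : ℝ)⁻¹ * ((2 * |r|) ^ n * ‖iteratedDeriv n g c‖) * (1 / 2) ^ n := by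
        rw [mul_pow, div_pow, one_pow]; field_simp
    _ ≤ C * (1 / 2) ^ n := by gcongr

theorem hasSum_integral_comp_add_of_differentiable {Ω : Type*} [MeasurableSpace Ω]
    {μ : Measure Ω} {g : ℂ → ℂ} (hg : Differentiable ℂ g) (c : ℂ) {W : Ω → ℂ}
    (hW : AEStronglyMeasurable W μ)
    (hdom : Integrable (fun ω => ∑' n, ‖iteratedDeriv n g c‖ / n ! * ‖W ω‖ ^ n) μ) :
    HasSum (fun n => (n ! : ℂ)⁻¹ * iteratedDeriv n g c * ∫ ω, W ω ^ n ∂μ)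
      (∫ ω, g (c + W ω) ∂μ) := by
  simp_rw [← integral_const_mul]
  refine hasSum_integral_of_dominated_convergence _ (fun n => (hW.pow n).const_mul _)
    (fun n => .of_forall fun ω => le_of_eq ?_)
    (.of_forall fun ω => summable_norm_iteratedDeriv_div_factorial_mul_pow hg c _) hdom
    (.of_forall fun ω => ?_)
  · simp [norm_pow, div_eq_inv_mul, mul_assoc]
  · convert hasSum_taylorSeries_of_entire hg c (c + W ω) using 2 with n
    rw [add_sub_cancel_left, smul_eq_mul, smul_eq_mul]
    ring

theorem expectation_entire_complex_error_eq_general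
    {Ω : Type*} [MeasurableSpace Ω] (μ : Measure Ω) [IsProbabilityMeasure μ]
    (g : ℂ → ℂ) (hg : Differentiable ℂ g)
    (x σ : ℝ)
    (U Z : Ω → ℝ)
    (hUlaw : μ.map U = gaussianReal 0 ((σ ^ 2).toNNReal))
    (hZlaw : μ.map Z = gaussianReal 0 1)
    (hindep : IndepFun U Z μ)
    (hdom : Integrable (fun ω =>
      ∑' k : ℕ, ‖iteratedDeriv k g (x : ℂ)‖ / (Nat.factorial k : ℝ) *
        ‖(U ω : ℂ) + Complex.I * σ * Z ω‖ ^ k) μ) :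
    ∫ ω, g ((x : ℂ) + U ω + Complex.I * σ * Z ω) ∂μ = g (x : ℂ) := by
  have hU : AEMeasurable U μ := aemeasurable_of_map_neZero (by rw [hUlaw]; infer_instance)
  have hZ : AEMeasurable Z μ := aemeasurable_of_map_neZero (by rw [hZlaw]; infer_instance)
  have hlaw : μ.map (fun ω => (U ω, Z ω)) =
      (gaussianReal 0 (σ ^ 2).toNNReal).prod (gaussianReal 0 1) := by
    rw [← hUlaw, ← hZlaw]
    exact (indepFun_iff_map_prod_eq_prod_map_map hU hZ).mp hindep
  have hmoment (n : ℕ) (hn : n ≠ 0) : ∫ ω, ((U ω : ℂ) + I * σ * Z ω) ^ n ∂μ = 0 := by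
    rw [← integral_add_I_mul_pow_gaussianReal_prod_eq_zero σ hn, ← hlaw,
      integral_map (hU.prodMk hZ) (by fun_prop)]
  have hsum := hasSum_integral_comp_add_of_differentiable hg x (by fun_prop) hdom
  simp_rw [← add_assoc] at hsum
  rw [← hsum.tsum_eq, tsum_eq_single 0 fun n hn => by rw [hmoment n hn, mul_zero]]
  simp

/-- Let `g : ℂ → ℂ` be entire, `x ∈ ℝ`, `σ > 0`, and `U ~ N(0, σ²)`, `Z ~ N(0, 1)` independent.
If `E[ ∑_k |g^{(k)}(x)|/k! ⬝ |U + iσZ|^k ] < ∞`, then `E[g(x + U + iσZ)] = g(x)`. -/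
theorem expectation_entire_complex_error_eq
    {Ω : Type*} [MeasurableSpace Ω] (μ : Measure Ω) [IsProbabilityMeasure μ]
    (g : ℂ → ℂ) (hg : Differentiable ℂ g)
    (x σ : ℝ) (hσ : 0 < σ)
    (U Z : Ω → ℝ) (hU : Measurable U) (hZ : Measurable Z)
    (hUlaw : μ.map U = gaussianReal 0 ((σ ^ 2).toNNReal))
    (hZlaw : μ.map Z = gaussianReal 0 1)
    (hindep : IndepFun U Z μ)
    (hdom : Integrable (fun ω =>
      ∑' k : ℕ, ‖iteratedDeriv k g (x : ℂ)‖ / (Nat.factorial k : ℝ) *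
        ‖(U ω : ℂ) + Complex.I * σ * Z ω‖ ^ k) μ) :
    ∫ ω, g ((x : ℂ) + U ω + Complex.I * σ * Z ω) ∂μ = g (x : ℂ) :=
  expectation_entire_complex_error_eq_general μ g hg x σ U Z hUlaw hZlaw hindep hdom
end

section
/- Let U be a real random variable that is ordinary smooth of order β > 1 with constant c > 0, with even, nowhere-vanishing characteristic function φ_U. Let ℓ ∈ ℕ₀ and let φ_K be ℓ-times differentiable with ‖φ_K^{(ℓ)}‖_∞ < ∞ and ∫ |t|^β |φ_K^{(ℓ)}(t)| dt < ∞. Then for each fixed x ∈ ℝ, lim_{h→0⁺} h^β K_{U,ℓ}(x) = (i^{−ℓ}/(2πc)) ∫ e^{−itx} |t|^β φ_K^{(ℓ)}(t) dt. -/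
/-
Substituting `s = |t| / h` (legitimate since `φ_U` is even) writes `h^β / φ_U(-t/h)` as
`|t|^β / (s^β φ_U(s))`, which tends to `|t|^β / c` as `h → 0⁺` by ordinary smoothness.
The same substitution gives a bound `A + B |t|^β` uniform in `h ∈ (0, 1]`: `s^β |φ_U(s)| ≥ c/2`
for large `s`, and the continuous nonvanishing `φ_U` is bounded below on the remaining compact
range. Since `φ_K^{(ℓ)}` is bounded with finite `β`-th moment, it is integrable, and dominated
convergence gives the limit.
-/

open MeasureTheory Filter Topology Complex

lemma continuous_integral_cexp_I_mul {Ω : Type*} [MeasurableSpace Ω] (μ : Measure Ω)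
    [IsFiniteMeasure μ] {U : Ω → ℝ} (hU : Measurable U) :
    Continuous fun t : ℝ => ∫ ω, exp (I * t * U ω) ∂μ := by
  have hchar : (fun t : ℝ => ∫ ω, exp (I * t * U ω) ∂μ) = charFun (μ.map U) := by
    funext t
    rw [charFun_apply_real, integral_map hU.aemeasurable (by fun_prop)]
    simp only [mul_comm I, mul_right_comm _ I]
  exact hchar ▸ continuous_charFun

lemma integrable_of_norm_le_of_integrable_abs_rpow_mul {E : Type*} [NormedAddCommGroup E]
    {f : ℝ → E} {β C : ℝ} (hβ : 0 ≤ β) (hf : AEStronglyMeasurable f) (hC : ∀ t, ‖f t‖ ≤ C)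
    (hmom : Integrable fun t => |t| ^ β * ‖f t‖) : Integrable f := by
  have hbox : Integrable (Set.indicator (Set.Icc (-1 : ℝ) 1) fun _ => C) :=
    (integrableOn_const measure_Icc_lt_top.ne).integrable_indicator measurableSet_Icc
  refine Integrable.mono' (hbox.add hmom) hf (ae_of_all _ fun t => ?_)
  show ‖f t‖ ≤ Set.indicator (Set.Icc (-1) 1) (fun _ => C) t + |t| ^ β * ‖f t‖
  rcases le_or_gt |t| 1 with ht | ht
  · rw [Set.indicator_of_mem (show t ∈ Set.Icc (-1) 1 from abs_le.1 ht)]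
    exact le_add_of_le_of_nonneg (hC t) (by positivity)
  · have hout : t ∉ Set.Icc (-1) 1 := fun hmem => ht.not_ge (abs_le.2 hmem)
    rw [Set.indicator_of_notMem hout, zero_add]
    exact le_mul_of_one_le_left (norm_nonneg _) (Real.one_le_rpow ht.le hβ)

lemma Function.Even.comp_abs {α : Type*} {f : ℝ → α} (hf : f.Even) (t : ℝ) : f |t| = f t := by
  rcases abs_choice t with h | h <;> rw [h]
  exact hf t

section OrdinarySmooth

variable {φ : ℝ → ℂ} {β : ℝ} {c : ℂ}

lemma exists_norm_inv_le_add_rpow (hφ : Continuous φ) (hne : ∀ s, φ s ≠ 0) (hc : c ≠ 0)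
    (hlim : Tendsto (fun s : ℝ => ((s ^ β : ℝ) : ℂ) * φ s) atTop (𝓝 c)) :
    ∃ A B : ℝ, 0 ≤ A ∧ ∀ s, 0 ≤ s → ‖φ s‖⁻¹ ≤ A + B * s ^ β := by
  obtain ⟨T, hT⟩ := eventually_atTop.1 <|
    hlim.norm.eventually_const_lt (half_lt_self (norm_pos_iff.2 hc))
  obtain ⟨A, hA⟩ := (isCompact_Icc (a := 0) (b := max T 0)).exists_bound_of_continuousOn
    (f := fun s => ‖φ s‖⁻¹) (hφ.norm.inv₀ fun s => norm_ne_zero_iff.2 (hne s)).continuousOn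
  have hA0 : 0 ≤ A := (norm_nonneg _).trans (hA 0 ⟨le_rfl, le_max_right _ _⟩)
  refine ⟨A, 2 / ‖c‖, hA0, fun s hs => ?_⟩
  rcases le_or_gt s (max T 0) with hsT | hsT
  · have hcompact := hA s ⟨hs, hsT⟩
    rw [Real.norm_of_nonneg (inv_nonneg.2 (norm_nonneg _))] at hcompact
    have hB : 0 ≤ 2 / ‖c‖ * s ^ β := by positivity
    linarith
  · have hlow := hT s ((le_max_left _ _).trans hsT.le)
    rw [norm_mul, Complex.norm_real, Real.norm_of_nonneg (Real.rpow_nonneg hs β)] at hlow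
    have hφs : 0 < ‖φ s‖ := norm_pos_iff.2 (hne s)
    have htail : ‖φ s‖⁻¹ ≤ 2 / ‖c‖ * s ^ β := by
      have hcn : 0 < ‖c‖ := norm_pos_iff.2 hc
      rw [inv_le_iff_one_le_mul₀' hφs]
      calc (1 : ℝ) = 2 / ‖c‖ * (‖c‖ / 2) := by field_simp
        _ ≤ 2 / ‖c‖ * (s ^ β * ‖φ s‖) := by gcongr
        _ = ‖φ s‖ * (2 / ‖c‖ * s ^ β) := by ring
    linarith

lemma exists_norm_rpow_div_comp_div_le (hβ : 0 ≤ β) (heven : φ.Even) (hφ : Continuous φ)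
    (hne : ∀ s, φ s ≠ 0) (hc : c ≠ 0)
    (hlim : Tendsto (fun s : ℝ => ((s ^ β : ℝ) : ℂ) * φ s) atTop (𝓝 c)) :
    ∃ A B : ℝ, ∀ t h : ℝ, 0 < h → h ≤ 1 → ‖((h ^ β : ℝ) : ℂ) / φ (t / h)‖ ≤ A + B * |t| ^ β := by
  obtain ⟨A, B, hA0, hAB⟩ := exists_norm_inv_le_add_rpow hφ hne hc hlim
  refine ⟨A, B, fun t h hh0 hh1 => ?_⟩
  have hhβ : 0 ≤ h ^ β := Real.rpow_nonneg hh0.le β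
  have hscale : h ^ β * |t / h| ^ β = |t| ^ β := by
    rw [← Real.mul_rpow hh0.le (abs_nonneg _), abs_div, abs_of_pos hh0, mul_div_cancel₀ _ hh0.ne']
  calc ‖((h ^ β : ℝ) : ℂ) / φ (t / h)‖ = h ^ β * ‖φ |t / h|‖⁻¹ := by
        rw [heven.comp_abs, norm_div, Complex.norm_real, Real.norm_of_nonneg hhβ, div_eq_mul_inv]
    _ ≤ h ^ β * (A + B * |t / h| ^ β) := by gcongr; exact hAB _ (abs_nonneg _)
    _ = h ^ β * A + B * |t| ^ β := by rw [← hscale]; ring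
    _ ≤ A + B * |t| ^ β := by
        gcongr
        exact mul_le_of_le_one_left hA0 (Real.rpow_le_one hh0.le hh1 hβ)

lemma tendsto_rpow_div_comp_div (hβ : 0 < β) (heven : φ.Even) (hc : c ≠ 0)
    (hlim : Tendsto (fun s : ℝ => ((s ^ β : ℝ) : ℂ) * φ s) atTop (𝓝 c)) (t : ℝ) :
    Tendsto (fun h : ℝ => ((h ^ β : ℝ) : ℂ) / φ (t / h)) (𝓝[>] 0)
      (𝓝 (((|t| ^ β : ℝ) : ℂ) / c)) := by
  rcases eq_or_ne t 0 with rfl | ht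
  · have hzero : Tendsto (fun h : ℝ => ((h ^ β : ℝ) : ℂ)) (𝓝[>] 0) (𝓝 0) := by
      have := ((Real.continuousAt_rpow_const 0 β (Or.inr hβ.le)).tendsto.mono_left
        (nhdsWithin_le_nhds (s := Set.Ioi 0))).ofReal
      rwa [Real.zero_rpow hβ.ne', Complex.ofReal_zero] at this
    simpa [Real.zero_rpow hβ.ne'] using hzero.div_const (φ 0)
  · have habs : 0 < |t| := abs_pos.2 ht
    have hs : Tendsto (fun h : ℝ => |t| / h) (𝓝[>] 0) atTop := by
      simpa only [div_eq_mul_inv] using tendsto_inv_nhdsGT_zero.const_mul_atTop habs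
    refine (tendsto_const_nhds.div (hlim.comp hs) hc).congr' ?_
    filter_upwards [self_mem_nhdsWithin] with h (hh : 0 < h)
    have hscale : |t| ^ β = (|t| / h) ^ β * h ^ β := by
      rw [← Real.mul_rpow (div_nonneg habs.le hh.le) hh.le, div_mul_cancel₀ _ hh.ne']
    have hne : (((|t| / h) ^ β : ℝ) : ℂ) ≠ 0 := by
      exact_mod_cast (Real.rpow_pos_of_pos (div_pos habs hh) β).ne'
    rw [Pi.div_apply, Function.comp_apply, hscale, Complex.ofReal_mul, mul_div_mul_left _ _ hne,
      ← heven.comp_abs (t / h), abs_div, abs_of_pos hh]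

lemma tendsto_integral_mul_rpow_div_comp_div (hβ : 0 < β) (heven : φ.Even) (hφ : Continuous φ)
    (hne : ∀ s, φ s ≠ 0) (hc : c ≠ 0)
    (hlim : Tendsto (fun s : ℝ => ((s ^ β : ℝ) : ℂ) * φ s) atTop (𝓝 c)) {g : ℝ → ℂ}
    (hg : Integrable g) (hg_mom : Integrable fun t => |t| ^ β * ‖g t‖) :
    Tendsto (fun h : ℝ => ∫ t, g t * (((h ^ β : ℝ) : ℂ) / φ (t / h))) (𝓝[>] 0)
      (𝓝 (∫ t, g t * (((|t| ^ β : ℝ) : ℂ) / c))) := by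
  obtain ⟨A, B, hAB⟩ := exists_norm_rpow_div_comp_div_le hβ.le heven hφ hne hc hlim
  refine tendsto_integral_filter_of_dominated_convergence (fun t => ‖g t‖ * (A + B * |t| ^ β))
    (Eventually.of_forall fun h => ?_) ?_ ?_
    (ae_of_all _ fun t => (tendsto_rpow_div_comp_div hβ heven hc hlim t).const_mul (g t))
  · exact hg.aestronglyMeasurable.mul
      (continuous_const.div (hφ.comp (by fun_prop)) fun t => hne _).aestronglyMeasurable
  · filter_upwards [Ioo_mem_nhdsGT one_pos] with h hh
    exact ae_of_all _ fun t => (norm_mul_le _ _).trans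
      (mul_le_mul_of_nonneg_left (hAB t h hh.1 hh.2.le) (norm_nonneg _))
  · exact ((hg.norm.mul_const A).add (hg_mom.const_mul B)).congr
      (ae_of_all _ fun t => by simp only [Pi.add_apply]; ring)

end OrdinarySmooth

theorem deconvoluting_kernel_ordinary_smooth_limit_general
    {Ω : Type*} [MeasurableSpace Ω] (μ : Measure Ω) [IsProbabilityMeasure μ]
    (U : Ω → ℝ) (hU : Measurable U)
    (φU : ℝ → ℂ)
    (hφU : ∀ t : ℝ, φU t = ∫ ω, Complex.exp (Complex.I * t * U ω) ∂μ)
    (β c : ℝ) (hβ : 1 < β) (hc : 0 < c)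
    (hord1 : Tendsto (fun t : ℝ => ((t ^ β : ℝ) : ℂ) * φU t) atTop (𝓝 (c : ℂ)))
    (hφU_even : ∀ t, φU (-t) = φU t) (hφU_ne : ∀ t, φU t ≠ 0)
    (ℓ : ℕ) (φK : ℝ → ℂ) (hφK_diff : ContDiff ℝ (ℓ : ℕ∞) φK)
    (hφK_bdd : ∃ C : ℝ, ∀ t, ‖iteratedDeriv ℓ φK t‖ ≤ C)
    (hφK_int : Integrable (fun t : ℝ => |t| ^ β * ‖iteratedDeriv ℓ φK t‖))
    (KUl : ℝ → ℝ → ℂ)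
    (hKUl : ∀ (h : ℝ) (y : ℝ), KUl h y
      = Complex.I ^ (-(ℓ : ℤ)) * (1 / (2 * Real.pi)) *
          ∫ t : ℝ, Complex.exp (-(Complex.I * t * y)) *
            (iteratedDeriv ℓ φK t / φU (-t / h)))
    (x : ℝ) :
    Tendsto (fun h : ℝ => ((h ^ β : ℝ) : ℂ) * KUl h x) (𝓝[>] (0 : ℝ))
      (𝓝 (Complex.I ^ (-(ℓ : ℤ)) / (2 * Real.pi * c) *
        ∫ t : ℝ, Complex.exp (-(Complex.I * t * x)) * ((|t| ^ β : ℝ) : ℂ) *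
          iteratedDeriv ℓ φK t)) := by
  set K := iteratedDeriv ℓ φK
  set e : ℝ → ℂ := fun t => exp (-(I * t * x))
  simp_rw [neg_div, hφU_even] at hKUl
  have hφU_cont : Continuous φU := funext hφU ▸ continuous_integral_cexp_I_mul μ hU
  have hK_cont : Continuous K := hφK_diff.continuous_iteratedDeriv ℓ le_rfl
  obtain ⟨C, hC⟩ := hφK_bdd
  have hnorm : ∀ t, ‖e t * K t‖ = ‖K t‖ := fun t => by simp [e, norm_exp]
  have hg_mom : Integrable fun t => |t| ^ β * ‖e t * K t‖ := by simpa only [hnorm] using hφK_int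
  have hg : Integrable fun t => e t * K t :=
    integrable_of_norm_le_of_integrable_abs_rpow_mul (by linarith)
      ((by fun_prop : Continuous e).mul hK_cont).aestronglyMeasurable
      (fun t => (hnorm t).trans_le (hC t)) hg_mom
  have hlim := tendsto_integral_mul_rpow_div_comp_div (by linarith) hφU_even hφU_cont hφU_ne
    (ofReal_ne_zero.2 hc.ne') hord1 hg hg_mom
  have hlhs : ∀ h : ℝ, ((h ^ β : ℝ) : ℂ) * KUl h x = I ^ (-(ℓ : ℤ)) * (1 / (2 * Real.pi)) *
      ∫ t, e t * K t * (((h ^ β : ℝ) : ℂ) / φU (t / h)) := by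
    intro h
    rw [hKUl, mul_left_comm, ← integral_const_mul]
    congr 2
    funext t
    ring
  have hrhs : I ^ (-(ℓ : ℤ)) / (2 * Real.pi * c) *
      ∫ t : ℝ, exp (-(I * t * x)) * ((|t| ^ β : ℝ) : ℂ) * K t
      = I ^ (-(ℓ : ℤ)) * (1 / (2 * Real.pi)) * ∫ t, e t * K t * (((|t| ^ β : ℝ) : ℂ) / c) := by
    have hreorder : ∀ t, e t * K t * (((|t| ^ β : ℝ) : ℂ) / c)
        = e t * ((|t| ^ β : ℝ) : ℂ) * K t / c := fun t => by ring
    simp_rw [hreorder, integral_div]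
    field_simp
    rfl
  rw [hrhs]
  simpa only [hlhs] using hlim.const_mul (I ^ (-(ℓ : ℤ)) * (1 / (2 * Real.pi)))

/-- Asymptotics of the deconvoluting kernel for ordinary smooth errors (Lemma B.3 of
Delaigle et al.).  If `U` is ordinary smooth of order `β > 1` with constant `c > 0`, with
even nowhere-vanishing characteristic function `φ_U`, and `φ_K` is `ℓ`-times differentiable
with bounded `ℓ`-th derivative satisfying `∫ |t|^β |φ_K^{(ℓ)}(t)| dt < ∞`, then for each
fixed `x`, `h^β K_{U,ℓ}(x) → (i^{−ℓ}/(2πc)) ∫ e^{−itx} |t|^β φ_K^{(ℓ)}(t) dt` as `h → 0⁺`. -/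
theorem deconvoluting_kernel_ordinary_smooth_limit
    {Ω : Type*} [MeasurableSpace Ω] (μ : Measure Ω) [IsProbabilityMeasure μ]
    (U : Ω → ℝ) (hU : Measurable U)
    (φU : ℝ → ℂ)
    (hφU : ∀ t : ℝ, φU t = ∫ ω, Complex.exp (Complex.I * t * U ω) ∂μ)
    (β c : ℝ) (hβ : 1 < β) (hc : 0 < c)
    (hord1 : Tendsto (fun t : ℝ => ((t ^ β : ℝ) : ℂ) * φU t) atTop (𝓝 (c : ℂ)))
    (hord2 : Tendsto (fun t : ℝ => ((t ^ (β + 1) : ℝ) : ℂ) * deriv φU t) atTop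
      (𝓝 (-(c * β) : ℂ)))
    (hφU_even : ∀ t, φU (-t) = φU t) (hφU_ne : ∀ t, φU t ≠ 0)
    (ℓ : ℕ) (φK : ℝ → ℂ) (hφK_diff : ContDiff ℝ (ℓ : ℕ∞) φK)
    (hφK_bdd : ∃ C : ℝ, ∀ t, ‖iteratedDeriv ℓ φK t‖ ≤ C)
    (hφK_int : Integrable (fun t : ℝ => |t| ^ β * ‖iteratedDeriv ℓ φK t‖))
    (KUl : ℝ → ℝ → ℂ)
    (hKUl : ∀ (h : ℝ) (y : ℝ), KUl h y
      = Complex.I ^ (-(ℓ : ℤ)) * (1 / (2 * Real.pi)) *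
          ∫ t : ℝ, Complex.exp (-(Complex.I * t * y)) *
            (iteratedDeriv ℓ φK t / φU (-t / h)))
    (x : ℝ) :
    Tendsto (fun h : ℝ => ((h ^ β : ℝ) : ℂ) * KUl h x) (𝓝[>] (0 : ℝ))
      (𝓝 (Complex.I ^ (-(ℓ : ℤ)) / (2 * Real.pi * c) *
        ∫ t : ℝ, Complex.exp (-(Complex.I * t * x)) * ((|t| ^ β : ℝ) : ℂ) *
          iteratedDeriv ℓ φK t)) :=
  deconvoluting_kernel_ordinary_smooth_limit_general μ U hU φU hφU β c hβ hc hord1 hφU_even hφU_ne ℓ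
    φK hφK_diff hφK_bdd hφK_int KUl hKUl x
end

section
/- Let (A_n, B_n) be a sequence of ℝ²-valued random vectors, (μ_A, μ_B) ∈ ℝ² with μ_A² + μ_B² ≠ 0 and not (μ_A = 0 and μ_B ≤ 0) (so atan2 is differentiable at (μ_A, μ_B)), and let (d_n) be a positive non-random sequence with d_n → ∞. Suppose d_n·(A_n − μ_A, B_n − μ_B) converges in distribution to the centered bivariate Gaussian distribution N(0, Σ), where Σ is a 2×2 covariance matrix. Then d_n·(atan2(A_n, B_n) − atan2(μ_A, μ_B)) converges in distribution to the centered real Gaussian N(0, v) with variance v = (μ_A² Σ₂₂ + μ_B² Σ₁₁ − 2 μ_A μ_B Σ₁₂) / (μ_A² + μ_B²)². -/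
/-!
Delta method. Put `Y n = d n • (X n - m)`. Differentiability of `g` at `m` bounds
`d n • (g (X n) - g m) - L (Y n)` by `c ‖Y n‖` as soon as `‖Y n‖ ≤ R` and `d n` is large; since
`Y n` converges in distribution it is tight, so this error tends to `0` in probability and Slutsky's
lemma hands the limit law `L_* ν` of `L (Y n)` over to `d n • (g (X n) - g m)`. For `g = atan2`, seen
as `(a, b) ↦ arg (b + a i) = Im (log (b + a i))`, one gets `L p = (μ_B p₁ - μ_A p₂) / (μ_A² + μ_B²)`,
and `L_* N(0, Σ)` is the stated Gaussian.
-/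

open MeasureTheory ProbabilityTheory Filter Topology Complex BoundedContinuousFunction

/-- A probability measure `ν` on `ℝ²` is the centered bivariate Gaussian with covariance
matrix `S` iff every linear functional pushes it forward to the corresponding centered real
Gaussian. -/
def IsCenteredGaussianPair (ν : Measure (ℝ × ℝ)) (S : Matrix (Fin 2) (Fin 2) ℝ) : Prop :=
  IsProbabilityMeasure ν ∧
    ∀ a b : ℝ, ν.map (fun p => a * p.1 + b * p.2)
      = gaussianReal 0 ((a ^ 2 * S 0 0 + 2 * a * b * S 0 1 + b ^ 2 * S 1 1).toNNReal)

namespace MeasureTheory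

variable {ι Ω Ω' E : Type*} {mΩ : MeasurableSpace Ω} {mΩ' : MeasurableSpace Ω'}
  {μ : Measure Ω} {μ' : Measure Ω'} [IsProbabilityMeasure μ] [IsProbabilityMeasure μ']
  [MeasurableSpace E]

lemma tendstoInDistribution_iff_forall_tendsto_integral [TopologicalSpace E]
    [OpensMeasurableSpace E] {l : Filter ι} {X : ι → Ω → E} {Z : Ω' → E}
    (hX : ∀ i, AEMeasurable (X i) μ) (hZ : AEMeasurable Z μ') :
    TendstoInDistribution X l Z (fun _ ↦ μ) μ' ↔
      ∀ f : E →ᵇ ℝ, Tendsto (fun i ↦ ∫ ω, f (X i ω) ∂μ) l (𝓝 (∫ ω, f (Z ω) ∂μ')) := by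
  refine ⟨fun h ↦ ?_, fun h ↦ ⟨hX, hZ, ?_⟩⟩
  · intro f
    have := ProbabilityMeasure.tendsto_iff_forall_integral_tendsto.mp h.tendsto f
    simpa [integral_map (hX _) f.continuous.aestronglyMeasurable,
      integral_map hZ f.continuous.aestronglyMeasurable] using this
  · refine ProbabilityMeasure.tendsto_iff_forall_integral_tendsto.mpr fun f ↦ ?_
    simpa [integral_map (hX _) f.continuous.aestronglyMeasurable,
      integral_map hZ f.continuous.aestronglyMeasurable] using h f

lemma TendstoInDistribution.isTightMeasureSet_range [PseudoMetricSpace E]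
    [SecondCountableTopology E] [CompleteSpace E] [BorelSpace E] {X : ℕ → Ω → E} {Z : Ω' → E}
    (h : TendstoInDistribution X atTop Z (fun _ ↦ μ) μ') :
    IsTightMeasureSet (Set.range fun n ↦ μ.map (X n)) := by
  have hcompact := h.tendsto.isCompact_insert_range.closure_of_subset (Set.subset_insert _ _)
  convert isTightMeasureSet_of_isCompact_closure hcompact using 1
  ext ν
  constructor
  · rintro ⟨n, rfl⟩
    exact ⟨_, ⟨n, rfl⟩, rfl⟩
  · rintro ⟨_, ⟨n, rfl⟩, rfl⟩
    exact ⟨n, rfl⟩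

end MeasureTheory

section DeltaMethod

variable {E F : Type*} [NormedAddCommGroup E] [NormedSpace ℝ E] [NormedAddCommGroup F]
  [NormedSpace ℝ F] {g : E → F} {L : E →L[ℝ] F} {m : E}

lemma HasFDerivAt.eventually_norm_smul_sub_sub_le (hg : HasFDerivAt g L m) (R : ℝ) {c : ℝ}
    (hc : 0 < c) : ∀ᶠ t : ℝ in atTop, ∀ x, ‖t • (x - m)‖ ≤ R →
      ‖t • (g x - g m) - L (t • (x - m))‖ ≤ c * ‖t • (x - m)‖ := by
  obtain ⟨η, hη, hball⟩ := Metric.eventually_nhds_iff.mp (hg.isLittleO.def hc)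
  filter_upwards [eventually_gt_atTop 0, eventually_gt_atTop (R / η)] with t ht htR x hx
  rw [norm_smul, Real.norm_of_nonneg ht.le] at hx ⊢
  have hxm : dist x m < η := by
    rw [div_lt_iff₀ hη] at htR
    rw [dist_eq_norm]
    exact lt_of_mul_lt_mul_left (hx.trans_lt (by linarith)) ht.le
  calc ‖t • (g x - g m) - L (t • (x - m))‖ = t * ‖g x - g m - L (x - m)‖ := by
        rw [map_smul, ← smul_sub, norm_smul, Real.norm_of_nonneg ht.le]
    _ ≤ t * (c * ‖x - m‖) := by gcongr; exact hball hxm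
    _ = c * (t * ‖x - m‖) := by ring

variable {Ω : Type*} {mΩ : MeasurableSpace Ω} {μ : Measure Ω} [MeasurableSpace E] {d : ℕ → ℝ}
  {X : ℕ → Ω → E}

lemma HasFDerivAt.tendstoInMeasure_smul_sub_sub [OpensMeasurableSpace E] (hg : HasFDerivAt g L m)
    (hd : Tendsto d atTop atTop) (hY : ∀ n, AEMeasurable (fun ω ↦ d n • (X n ω - m)) μ)
    (htight : IsTightMeasureSet (Set.range fun n ↦ μ.map fun ω ↦ d n • (X n ω - m))) :
    TendstoInMeasure μ (fun n ω ↦ d n • (g (X n ω) - g m) - L (d n • (X n ω - m))) atTop 0 := by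
  rw [tendstoInMeasure_iff_norm]
  intro ε hε
  rw [ENNReal.tendsto_nhds_zero]
  intro δ hδ
  obtain ⟨R, hRδ, hR⟩ := ((ENNReal.tendsto_nhds_zero.mp
    (tendsto_measure_norm_gt_of_isTightMeasureSet htight) δ hδ).and
    (eventually_gt_atTop 0)).exists
  filter_upwards [hd.eventually (hg.eventually_norm_smul_sub_sub_le R (c := ε / (2 * R))
    (by positivity))] with n hn
  calc μ {ω | ε ≤ ‖d n • (g (X n ω) - g m) - L (d n • (X n ω - m)) - 0‖}
      ≤ μ ((fun ω ↦ d n • (X n ω - m)) ⁻¹' {y | R < ‖y‖}) := by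
        refine measure_mono fun ω hω ↦ ?_
        by_contra hsmall
        have hle := hn (X n ω) (not_lt.mp hsmall)
        rw [Set.mem_ofPred_eq, sub_zero] at hω
        have : ε / (2 * R) * ‖d n • (X n ω - m)‖ ≤ ε / 2 := by
          calc ε / (2 * R) * ‖d n • (X n ω - m)‖ ≤ ε / (2 * R) * R := by
                gcongr; exact not_lt.mp hsmall
            _ = ε / 2 := by field_simp
        linarith
    _ = μ.map (fun ω ↦ d n • (X n ω - m)) {y | R < ‖y‖} :=
        (Measure.map_apply_of_aemeasurable (hY n)
          (measurableSet_lt measurable_const measurable_norm)).symm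
    _ ≤ ⨆ ν ∈ Set.range fun n ↦ μ.map fun ω ↦ d n • (X n ω - m), (ν : Measure E) {y | R < ‖y‖} :=
        le_iSup₂ (f := fun (ν : Measure E) _ ↦ ν {y : E | R < ‖y‖}) _ (Set.mem_range_self n)
    _ ≤ δ := hRδ

theorem MeasureTheory.TendstoInDistribution.delta_method [IsProbabilityMeasure μ] {Ω' : Type*}
    {mΩ' : MeasurableSpace Ω'} {μ' : Measure Ω'} [IsProbabilityMeasure μ'] [BorelSpace E]
    [SecondCountableTopology E] [CompleteSpace E] [MeasurableSpace F] [BorelSpace F]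
    [SecondCountableTopology F] (hg : HasFDerivAt g L m) (hg_meas : Measurable g)
    (hd : Tendsto d atTop atTop) (hX : ∀ n, AEMeasurable (X n) μ) {Z : Ω' → E}
    (h : TendstoInDistribution (fun n ω ↦ d n • (X n ω - m)) atTop Z (fun _ ↦ μ) μ') :
    TendstoInDistribution (fun n ω ↦ d n • (g (X n ω) - g m)) atTop (L ∘ Z) (fun _ ↦ μ) μ' :=
  tendstoInDistribution_of_tendstoInMeasure_sub _ _ (h.continuous_comp L.continuous)
    (hg.tendstoInMeasure_smul_sub_sub hd h.forall_aemeasurable h.isTightMeasureSet_range)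
    fun n ↦ ((hg_meas.comp_aemeasurable (hX n)).sub_const _).const_smul _

end DeltaMethod

lemma hasFDerivAt_arg_snd_add_fst_mul_I {a b : ℝ} (hab : (b : ℂ) + a * I ∈ slitPlane) :
    HasFDerivAt (fun p : ℝ × ℝ ↦ arg (p.2 + p.1 * I))
      ((b / (a ^ 2 + b ^ 2)) • ContinuousLinearMap.fst ℝ ℝ ℝ
        - (a / (a ^ 2 + b ^ 2)) • ContinuousLinearMap.snd ℝ ℝ ℝ) (a, b) := by
  let T : ℝ × ℝ →L[ℝ] ℂ := ofRealCLM.comp (ContinuousLinearMap.snd ℝ ℝ ℝ)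
    + I • ofRealCLM.comp (ContinuousLinearMap.fst ℝ ℝ ℝ)
  have hT (p : ℝ × ℝ) : T p = p.2 + p.1 * I := by simp [T, mul_comm]
  have hlog : HasFDerivAt log _ (T (a, b)) :=
    (hT (a, b)).symm ▸ (hasDerivAt_log hab).hasFDerivAt.restrictScalars ℝ
  have h := imCLM.hasFDerivAt.comp (a, b) (hlog.comp (a, b) T.hasFDerivAt)
  simp only [Function.comp_def, hT, imCLM_apply, log_im] at h
  refine h.congr_fderiv (ContinuousLinearMap.ext fun p ↦ ?_)
  have hns : normSq (b + a * I) = a ^ 2 + b ^ 2 := (normSq_add_mul_I b a).trans (add_comm _ _)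
  simp only [ContinuousLinearMap.comp_apply, hT, ContinuousLinearMap.coe_restrictScalars',
    ContinuousLinearMap.toSpanSingleton_apply, smul_eq_mul, imCLM_apply, mul_im, add_re, ofReal_re,
    mul_re, I_re, mul_zero, ofReal_im, I_im, mul_one, sub_self, add_zero, inv_im, add_im, zero_add,
    hns, inv_re, _root_.sub_apply, _root_.smul_apply, ContinuousLinearMap.coe_fst',
    ContinuousLinearMap.coe_snd']
  ring

lemma ofReal_add_ofReal_mul_I_mem_slitPlane {a b : ℝ} (h : ¬(a = 0 ∧ b ≤ 0)) :
    (b : ℂ) + a * I ∈ slitPlane := by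
  rw [mem_slitPlane_iff]
  rcases eq_or_ne a 0 with ha | ha
  · left
    simpa using not_le.mp fun hb ↦ h ⟨ha, hb⟩
  · right
    simpa using ha

lemma IsCenteredGaussianPair.map_continuousLinearMap {ν : Measure (ℝ × ℝ)}
    {S : Matrix (Fin 2) (Fin 2) ℝ} (hν : IsCenteredGaussianPair ν S) (L : ℝ × ℝ →L[ℝ] ℝ) :
    ν.map L = gaussianReal 0 ((L (1, 0) ^ 2 * S 0 0 + 2 * L (1, 0) * L (0, 1) * S 0 1
      + L (0, 1) ^ 2 * S 1 1).toNNReal) := by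
  have hL : ⇑L = fun p ↦ L (1, 0) * p.1 + L (0, 1) * p.2 := by
    funext p
    calc L p = L (p.1 • (1, 0) + p.2 • (0, 1)) := by simp
      _ = L (1, 0) * p.1 + L (0, 1) * p.2 := by
        rw [map_add, map_smul, map_smul, smul_eq_mul, smul_eq_mul, mul_comm p.1, mul_comm p.2]
  conv_lhs => rw [hL]
  exact hν.2 _ _

theorem atan2_delta_method_general
    {Ω : Type*} [MeasurableSpace Ω] (μ : Measure Ω) [IsProbabilityMeasure μ]
    (A B : ℕ → Ω → ℝ) (hA : ∀ n, Measurable (A n)) (hB : ∀ n, Measurable (B n))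
    (μA μB : ℝ) (hne : μA ^ 2 + μB ^ 2 ≠ 0) (haxis : ¬(μA = 0 ∧ μB ≤ 0))
    (d : ℕ → ℝ) (hd_lim : Tendsto d atTop atTop)
    (S : Matrix (Fin 2) (Fin 2) ℝ)
    (ν : Measure (ℝ × ℝ)) (hν : IsCenteredGaussianPair ν S)
    (hconv : ∀ f : (ℝ × ℝ) →ᵇ ℝ,
      Tendsto (fun n => ∫ ω, f (d n * (A n ω - μA), d n * (B n ω - μB)) ∂μ) atTop
        (𝓝 (∫ p, f p ∂ν))) :
    ∀ f : ℝ →ᵇ ℝ,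
      Tendsto (fun n => ∫ ω,
          f (d n * (Complex.arg ((B n ω : ℂ) + (A n ω : ℂ) * Complex.I)
              - Complex.arg ((μB : ℂ) + (μA : ℂ) * Complex.I))) ∂μ) atTop
        (𝓝 (∫ y, f y ∂(gaussianReal 0
          (((μA ^ 2 * S 1 1 + μB ^ 2 * S 0 0 - 2 * μA * μB * S 0 1) /
              (μA ^ 2 + μB ^ 2) ^ 2).toNNReal)))) := by
  intro f
  have : IsProbabilityMeasure ν := hν.1
  have hX (n : ℕ) : Measurable fun ω ↦ (A n ω, B n ω) := (hA n).prodMk (hB n)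
  have hY : TendstoInDistribution (fun n ω ↦ d n • ((A n ω, B n ω) - (μA, μB))) atTop id
      (fun _ ↦ μ) ν := by
    refine (tendstoInDistribution_iff_forall_tendsto_integral
      (fun n ↦ (((hX n).sub_const (μA, μB)).const_smul (d n)).aemeasurable)
      aemeasurable_id).mpr ?_
    simpa using hconv
  set L : ℝ × ℝ →L[ℝ] ℝ := (μB / (μA ^ 2 + μB ^ 2)) • ContinuousLinearMap.fst ℝ ℝ ℝ
    - (μA / (μA ^ 2 + μB ^ 2)) • ContinuousLinearMap.snd ℝ ℝ ℝ
  have hdelta := hY.delta_method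
    (hasFDerivAt_arg_snd_add_fst_mul_I (ofReal_add_ofReal_mul_I_mem_slitPlane haxis))
    (measurable_arg.comp (by fun_prop)) hd_lim fun n ↦ (hX n).aemeasurable
  have hlaw : ν.map L = gaussianReal 0 (((μA ^ 2 * S 1 1 + μB ^ 2 * S 0 0
      - 2 * μA * μB * S 0 1) / (μA ^ 2 + μB ^ 2) ^ 2).toNNReal) := by
    rw [hν.map_continuousLinearMap L]
    congr 2
    simp only [L, _root_.sub_apply, _root_.smul_apply, ContinuousLinearMap.coe_fst',
      ContinuousLinearMap.coe_snd', smul_eq_mul, mul_one, mul_zero, sub_zero, zero_sub]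
    field_simp
    ring
  rw [← hlaw, integral_map L.measurable.aemeasurable f.continuous.aestronglyMeasurable]
  simpa using (tendstoInDistribution_iff_forall_tendsto_integral hdelta.forall_aemeasurable
    L.measurable.aemeasurable).mp hdelta f

/-- Delta method for atan2.  If `d_n (A_n − μ_A, B_n − μ_B)` converges in distribution to a
centered bivariate Gaussian `N(0, Σ)`, `d_n → ∞`, `μ_A² + μ_B² ≠ 0` and `(μ_B, μ_A)` is off
the closed negative real axis (so atan2 is differentiable at `(μ_A, μ_B)`), then
`d_n (atan2(A_n, B_n) − atan2(μ_A, μ_B))` converges in distribution to the centered real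
Gaussian with variance
`(μ_A² Σ₂₂ + μ_B² Σ₁₁ − 2 μ_A μ_B Σ₁₂)/(μ_A² + μ_B²)²`.  Here `atan2(y, x)` is realized as
the argument of the complex number `x + iy`, and convergence in distribution is expressed
by testing against bounded continuous functions. -/
theorem atan2_delta_method
    {Ω : Type*} [MeasurableSpace Ω] (μ : Measure Ω) [IsProbabilityMeasure μ]
    (A B : ℕ → Ω → ℝ) (hA : ∀ n, Measurable (A n)) (hB : ∀ n, Measurable (B n))
    (μA μB : ℝ) (hne : μA ^ 2 + μB ^ 2 ≠ 0) (haxis : ¬(μA = 0 ∧ μB ≤ 0))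
    (d : ℕ → ℝ) (hd_pos : ∀ n, 0 < d n) (hd_lim : Tendsto d atTop atTop)
    (S : Matrix (Fin 2) (Fin 2) ℝ) (hS : S.PosSemidef)
    (ν : Measure (ℝ × ℝ)) (hν : IsCenteredGaussianPair ν S)
    (hconv : ∀ f : (ℝ × ℝ) →ᵇ ℝ,
      Tendsto (fun n => ∫ ω, f (d n * (A n ω - μA), d n * (B n ω - μB)) ∂μ) atTop
        (𝓝 (∫ p, f p ∂ν))) :
    ∀ f : ℝ →ᵇ ℝ,
      Tendsto (fun n => ∫ ω,
          f (d n * (Complex.arg ((B n ω : ℂ) + (A n ω : ℂ) * Complex.I)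
              - Complex.arg ((μB : ℂ) + (μA : ℂ) * Complex.I))) ∂μ) atTop
        (𝓝 (∫ y, f y ∂(gaussianReal 0
          (((μA ^ 2 * S 1 1 + μB ^ 2 * S 0 0 - 2 * μA * μB * S 0 1) /
              (μA ^ 2 + μB ^ 2) ^ 2).toNNReal)))) :=
  atan2_delta_method_general μ A B hA hB μA μB hne haxis d hd_lim S ν hν hconv
end
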